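/- Let n ≥ 1 and let v_1, …, v_{2n}, v'_1, …, v'_{2n} be 4n pairwise distinct points on the circle S¹ = ℝ/2πℤ such that for all i ≠ j, the closed arcs [v_i, v'_i] and [v_j, v'_j] (each taken in the positive direction) have endpoints that alternate around the circle (i.e., exactly one of v_j, v'_j lies in the open arc (v_i, v'_i)). Then there exists a homeomorphism f : S¹ → S¹ such that f(v_i) and f(v'_i) are antipodal points for every i. -/

import Mathlib

open Real in
/-- The open arc of the circle `ℝ/2πℤ` from `p` to `q`, traversed in the
positive direction. -/
def openArc (p q : AddCircle (2 * π)) : Set (AddCircle (2 * π)) :=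
  {x | ∃ P X Q : ℝ, (P : AddCircle (2 * π)) = p ∧ (X : AddCircle (2 * π)) = x ∧
    (Q : AddCircle (2 * π)) = q ∧ P < X ∧ X < Q ∧ Q < P + 2 * π}

/-!
Lift the `4n` points to `[0, 2π)` and list them in increasing order `w₀ < ⋯ < w₄ₙ₋₁`. The open
arc from `w_a` to `w_b` contains exactly the points `w_k` with `0 < k - a < b - a` (mod `4n`),
so it contains `(b - a mod 4n) - 1` of them. By alternation the arc `(v_i, v'_i)` contains
exactly one point of each of the other `2n - 1` pairs, so every pair is `{w_a, w_{a+2n}}`. The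
circle homeomorphism lifting the piecewise-linear map `w_k ↦ 2πk/4n` sends such a pair to an
antipodal one.
-/

open Set Finset Real

theorem Fin.exists_castSucc_le_and_lt_succ {α : Type*} [LinearOrder α] {N : ℕ}
    (u : Fin (N + 1) → α) {y : α} (h0 : u 0 ≤ y) (hN : y < u (Fin.last N)) :
    ∃ k : Fin N, u k.castSucc ≤ y ∧ y < u k.succ := by
  by_contra! h
  have hle : ∀ j, u j ≤ y := fun j => Fin.induction h0 (fun k hk => h k hk) j
  exact (hle (Fin.last N)).not_gt hN

theorem Fin.strictMono_snoc {α : Type*} [Preorder α] {N : ℕ} {w : Fin N → α} (hw : StrictMono w)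
    {x : α} (hx : ∀ k, w k < x) : StrictMono (Fin.snoc w x : Fin (N + 1) → α) := by
  intro i j hij
  induction j using Fin.lastCases with
  | last =>
    obtain ⟨i, rfl⟩ := Fin.exists_castSucc_eq.2 hij.ne
    simpa using hx i
  | cast j =>
    obtain ⟨i, rfl⟩ := Fin.exists_castSucc_eq.2 (hij.trans (Fin.castSucc_lt_last j)).ne
    simpa using hw (Fin.castSucc_lt_castSucc_iff.1 hij)

theorem exists_equiv_fin_strictMono {ι α : Type*} [Fintype ι] [LinearOrder α] {f : ι → α}
    (hf : Function.Injective f) {N : ℕ} (hN : Fintype.card ι = N) :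
    ∃ e : Fin N ≃ ι, StrictMono (f ∘ e) :=
  letI : LinearOrder ι := LinearOrder.lift' f hf
  ⟨(Fintype.orderIsoFinOfCardEq ι hN).toEquiv, (Fintype.orderIsoFinOfCardEq ι hN).strictMono⟩

theorem Fin.card_filter_sub_val_pos_and_lt {N : ℕ} [NeZero N] (a : Fin N) {d : ℕ} (hd : d ≤ N) :
    #{k : Fin N | 0 < ((k - a : Fin N) : ℕ) ∧ ((k - a : Fin N) : ℕ) < d} = d - 1 := by
  rw [card_equiv (Equiv.subRight a) (t := {m : Fin N | 0 < (m : ℕ) ∧ (m : ℕ) < d}) (by simp),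
    ← card_map Fin.valEmbedding]
  refine (congrArg card ?_).trans (Nat.card_Ioo 0 d)
  ext x
  simp only [mem_map, mem_filter, Finset.mem_univ, true_and, Fin.valEmbedding_apply,
    Finset.mem_Ioo]
  exact ⟨by rintro ⟨m, hm, rfl⟩; exact hm, fun hx => ⟨⟨x, by omega⟩, hx, rfl⟩⟩

theorem card_filter_sum_elim_mem_of_xor {α κ : Type*} [Fintype κ] [DecidableEq κ] {s : Set α}
    [DecidablePred (· ∈ s)] {v v' : κ → α} (i : κ) (hi : v i ∉ s) (hi' : v' i ∉ s)
    (halt : ∀ j, i ≠ j → Xor (v j ∈ s) (v' j ∈ s)) :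
    #{z | Sum.elim v v' z ∈ s} = Fintype.card κ - 1 := by
  have hpair : ∀ j, (if Sum.elim v v' (.inl j) ∈ s then 1 else 0) +
      (if Sum.elim v v' (.inr j) ∈ s then 1 else 0) = if i ≠ j then 1 else 0 := fun j => by
    by_cases hij : i = j
    · subst hij; simp [hi, hi']
    · rcases halt j hij with ⟨h1, h2⟩ | ⟨h1, h2⟩ <;> simp [hij, h1, h2]
  rw [card_filter, Fintype.sum_sum_type, ← sum_add_distrib, sum_congr rfl fun j _ => hpair j,
    sum_boole, filter_ne, card_erase_of_mem (Finset.mem_univ i), card_univ, Nat.cast_id]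

theorem Set.coe_projIcc_lt_coe_projIcc {α : Type*} [LinearOrder α] {a b : α} (h : a ≤ b)
    {s t : α} (hs : s ∈ Ico a b) (hst : s < t) : (projIcc a b h s : α) < projIcc a b h t := by
  rw [projIcc_of_mem _ (Ico_subset_Icc_self hs), coe_projIcc]
  exact lt_max_of_lt_right (lt_min hs.2 hst)

-- The piecewise-linear interpolation of `u k ↦ k`, written as a sum of clamped ramps.
noncomputable def interpIndex {N : ℕ} (u : Fin (N + 1) → ℝ) (y : ℝ) : ℝ :=
  ∑ k : Fin N, (projIcc 0 1 zero_le_one ((y - u k.castSucc) / (u k.succ - u k.castSucc)) : ℝ)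

namespace interpIndex

variable {N : ℕ} {u : Fin (N + 1) → ℝ}

protected theorem continuous (u : Fin (N + 1) → ℝ) : Continuous (interpIndex u) := by
  unfold interpIndex; fun_prop

theorem apply_eq (hu : StrictMono u) (a : Fin (N + 1)) : interpIndex u (u a) = a := by
  have hterm : ∀ k : Fin N, (projIcc (0 : ℝ) 1 zero_le_one
      ((u a - u k.castSucc) / (u k.succ - u k.castSucc)) : ℝ) = if (k : ℕ) < a then 1 else 0 := by
    intro k
    have hd : 0 < u k.succ - u k.castSucc := sub_pos.2 (hu k.castSucc_lt_succ)
    split_ifs with h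
    · rw [projIcc_of_right_le _ ((one_le_div hd).2 (sub_le_sub_right (hu.monotone ?_) _))]
      exact Fin.le_def.2 h
    · rw [projIcc_of_le_left _ (div_nonpos_of_nonpos_of_nonneg ?_ hd.le)]
      exact sub_nonpos.2 (hu.monotone (not_lt.1 h))
  simp only [interpIndex, hterm, Finset.sum_boole, Fin.card_filter_val_lt,
    min_eq_right (Fin.is_le a)]

protected theorem strictMonoOn (hu : StrictMono u) :
    StrictMonoOn (interpIndex u) (Icc (u 0) (u (Fin.last N))) := by
  intro y hy y' hy' hyy'
  obtain ⟨k, hk, hk'⟩ := Fin.exists_castSucc_le_and_lt_succ u hy.1 (hyy'.trans_le hy'.2)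
  have hd : ∀ j : Fin N, 0 < u j.succ - u j.castSucc := fun j => sub_pos.2 (hu j.castSucc_lt_succ)
  refine Finset.sum_lt_sum (fun j _ => ?_) ⟨k, Finset.mem_univ _, ?_⟩
  · exact monotone_projIcc _ (div_le_div_of_nonneg_right (by linarith) (hd j).le)
  · refine coe_projIcc_lt_coe_projIcc _ ⟨div_nonneg (by linarith) (hd k).le, ?_⟩
      (div_lt_div_of_pos_right (by linarith) (hd k))
    rw [div_lt_one (hd k)]
    linarith

end interpIndex

namespace AddCircle

variable {p : ℝ}

theorem coe_mul_val_div_eq_add {N : ℕ} [NeZero N] (a b : Fin N) :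
    ((p * b / N : ℝ) : AddCircle p) = (p * a / N : ℝ) + (p * ((b - a : Fin N) : ℕ) / N : ℝ) := by
  set q := ((a : ℕ) + ((b - a : Fin N) : ℕ)) / N
  have hval : (a : ℕ) + ((b - a : Fin N) : ℕ) = b + N * q := by
    conv_lhs => rw [← Nat.mod_add_div ((a : ℕ) + ((b - a : Fin N) : ℕ)) N, ← Fin.val_add,
      add_sub_cancel]
  have hN : (N : ℝ) ≠ 0 := NeZero.ne _
  have hsum : p * a / N + p * ((b - a : Fin N) : ℕ) / N = p * b / N + q • p := by
    rw [← add_div, ← mul_add, nsmul_eq_mul]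
    field_simp
    exact_mod_cast congrArg (fun x : ℕ => p * x) hval
  rw [← coe_add, hsum, coe_add, coe_nsmul, coe_period, smul_zero, add_zero]

variable [Fact (0 < p)]

theorem exists_homeomorph_coe_apply_of_strictMonoOn {a : ℝ} {G : ℝ → ℝ}
    (hc : ContinuousOn G (Icc a (a + p))) (hm : StrictMonoOn G (Icc a (a + p)))
    (hper : G (a + p) = G a + p) :
    ∃ f : AddCircle p ≃ₜ AddCircle p, ∀ y ∈ Ico a (a + p), f y = G y := by
  have hp : 0 < p := Fact.out
  let g := liftIco p a fun y => (G y : AddCircle p)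
  have hg : ∀ y ∈ Ico a (a + p), g y = G y := fun y hy => liftIco_coe_apply hy
  have hGIco : ∀ y ∈ Ico a (a + p), G y ∈ Ico (G a) (G a + p) := fun y hy =>
    ⟨hm.monotoneOn (left_mem_Icc.2 (by linarith)) (Ico_subset_Icc_self hy) hy.1,
      hper ▸ hm (Ico_subset_Icc_self hy) (right_mem_Icc.2 (by linarith)) hy.2⟩
  have hinj : Function.Injective g := by
    intro x x' hxx'
    obtain ⟨y, hy, rfl⟩ := (coe_image_Ico_eq p a).symm ▸ mem_univ x
    obtain ⟨y', hy', rfl⟩ := (coe_image_Ico_eq p a).symm ▸ mem_univ x'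
    rw [hg y hy, hg y' hy', coe_eq_coe_iff_of_mem_Ico (hGIco y hy) (hGIco y' hy')] at hxx'
    rw [hm.injOn (Ico_subset_Icc_self hy) (Ico_subset_Icc_self hy') hxx']
  have hsurj : Function.Surjective g := by
    intro z
    obtain ⟨Z, hZ, rfl⟩ := (coe_image_Ico_eq p (G a)).symm ▸ mem_univ z
    obtain ⟨y, hy, rfl⟩ := intermediate_value_Ico (by linarith) hc (hper ▸ hZ)
    exact ⟨y, hg y hy⟩
  have hcont : Continuous g :=
    liftIco_continuous (by rw [hper, coe_add_period]) (continuous_quotient_mk'.comp_continuousOn hc)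
  exact ⟨hcont.homeoOfEquivCompactToT2 (f := Equiv.ofBijective g ⟨hinj, hsurj⟩), hg⟩

theorem exists_homeomorph_coe_apply_of_partition {N : ℕ} {u : Fin (N + 1) → ℝ}
    (hu : StrictMono u) (hper : u (Fin.last N) = u 0 + p) :
    ∃ f : AddCircle p ≃ₜ AddCircle p, ∀ k : Fin N, f (u k.castSucc) = (p * k / N : ℝ) := by
  have hp : 0 < p := Fact.out
  have hN : (0 : ℝ) < N := by
    rcases N with _ | N
    · rw [Fin.last_zero] at hper; linarith
    · positivity
  have hmono := interpIndex.strictMonoOn hu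
  rw [hper] at hmono
  obtain ⟨f, hf⟩ := exists_homeomorph_coe_apply_of_strictMonoOn
    (G := fun y => p / N * interpIndex u y)
    ((interpIndex.continuous u).const_smul (p / N)).continuousOn
    (fun x hx y hy hxy => mul_lt_mul_of_pos_left (hmono hx hy hxy) (div_pos hp hN))
    (by
      simp only [← hper, interpIndex.apply_eq hu, Fin.val_last, Fin.val_zero, Nat.cast_zero,
        mul_zero, zero_add]
      field_simp)
  refine ⟨f, fun k => ?_⟩
  rw [hf _ ⟨hu.monotone (Fin.zero_le _), hper ▸ hu (Fin.castSucc_lt_last k)⟩,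
    interpIndex.apply_eq hu, Fin.val_castSucc]
  congr 1
  ring

theorem exists_homeomorph_coe_apply_of_strictMono {N : ℕ} [NeZero N] {w : Fin N → ℝ}
    (hw : StrictMono w) (hwin : ∀ k, w k < w 0 + p) :
    ∃ f : AddCircle p ≃ₜ AddCircle p, ∀ k : Fin N, f (w k) = (p * k / N : ℝ) := by
  obtain ⟨f, hf⟩ := exists_homeomorph_coe_apply_of_partition (Fin.strictMono_snoc hw hwin)
    (by rw [Fin.snoc_last, ← Fin.castSucc_zero', Fin.snoc_castSucc])
  exact ⟨f, fun k => by simpa using hf k⟩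

end AddCircle

instance Real.fact_zero_lt_two_pi : Fact (0 < 2 * π) := ⟨two_pi_pos⟩

theorem coe_mem_openArc_iff {P X Q : ℝ} (hX : X ∈ Ico P (P + 2 * π))
    (hQ : Q ∈ Ico P (P + 2 * π)) :
    (X : AddCircle (2 * π)) ∈ openArc P Q ↔ P < X ∧ X < Q := by
  constructor
  · rintro ⟨P', X', Q', hP', hX', hQ', hPX, hXQ, hQP⟩
    have hshift : ∀ {Y Y' : ℝ}, Y ∈ Ico P (P + 2 * π) → (Y' : AddCircle (2 * π)) = Y →
        Y' ∈ Ico P' (P' + 2 * π) → Y' - P' = Y - P := fun {Y Y'} hY hY' hY'' => by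
      rw [← AddCircle.coe_eq_coe_iff_of_mem_Ico (p := 2 * π) (a := 0)
        (by constructor <;> linarith [hY''.1, hY''.2]) (by constructor <;> linarith [hY.1, hY.2]),
        AddCircle.coe_sub, AddCircle.coe_sub, hY', hP']
    have h1 := hshift hX hX' ⟨hPX.le, by linarith⟩
    have h2 := hshift hQ hQ' ⟨by linarith, hQP⟩
    constructor <;> linarith
  · rintro ⟨hPX, hXQ⟩
    exact ⟨P, X, Q, rfl, rfl, rfl, hPX, hXQ, hQ.2⟩

theorem coe_mem_openArc_iff_sub_val {N : ℕ} [NeZero N] {w : Fin N → ℝ} (hw : StrictMono w)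
    (hwin : ∀ k, w k < w 0 + 2 * π) (a b k : Fin N) :
    (w k : AddCircle (2 * π)) ∈ openArc (w a) (w b) ↔
      0 < ((k - a : Fin N) : ℕ) ∧ ((k - a : Fin N) : ℕ) < ((b - a : Fin N) : ℕ) := by
  let L : Fin N → ℝ := fun k => if k < a then w k + 2 * π else w k
  have hw0 : ∀ k, w 0 ≤ w k := fun k => hw.monotone (Fin.zero_le k)
  have hL_coe : ∀ k, (L k : AddCircle (2 * π)) = w k := fun k => by
    simp only [L]; split_ifs <;> simp
  have hLa : L a = w a := if_neg (lt_irrefl a)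
  have hL_mem : ∀ k, L k ∈ Ico (L a) (L a + 2 * π) := fun k => by
    have := hwin a; have := hwin k; have := hw0 a; have := hw0 k
    rw [hLa]; simp only [L]; split_ifs with h
    · have := hw h; constructor <;> linarith
    · have := hw.monotone (not_lt.1 h); constructor <;> linarith
  have hsub : ∀ k : Fin N, ((k - a : Fin N) : ℕ) = if k < a then N + k - a else k - a := fun k => by
    split_ifs with h
    · exact Fin.coe_sub_iff_lt.2 h
    · exact Fin.coe_sub_iff_le.2 (not_lt.1 h)
  have hL_lt : ∀ k l, L k < L l ↔ ((k - a : Fin N) : ℕ) < ((l - a : Fin N) : ℕ) := fun k l => by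
    have := hwin k; have := hwin l; have := hw0 k; have := hw0 l
    have := k.isLt; have := l.isLt
    have hwlt : w k < w l ↔ (k : ℕ) < l := by rw [hw.lt_iff_lt, Fin.lt_def]
    simp only [L, hsub, Fin.lt_def]
    split_ifs
    · rw [add_lt_add_iff_right, hwlt]; omega
    · exact iff_of_false (by linarith) (by omega)
    · exact iff_of_true (by linarith) (by omega)
    · rw [hwlt]; omega
  rw [← hL_coe k, ← hL_coe b, ← hL_coe a, coe_mem_openArc_iff (hL_mem k) (hL_mem b), hL_lt,
    hL_lt, sub_self, Fin.val_zero]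

theorem val_sub_eq_of_alternating {m : ℕ} [NeZero (2 * m)] {w : Fin (2 * m) → ℝ}
    (hw : StrictMono w) (hwin : ∀ k, w k < w 0 + 2 * π) {v v' : Fin m → AddCircle (2 * π)}
    (e : Fin (2 * m) ≃ Fin m ⊕ Fin m) (hwe : ∀ k, (w k : AddCircle (2 * π)) = Sum.elim v v' (e k))
    (halt : ∀ i j, i ≠ j → Xor (v j ∈ openArc (v i) (v' i)) (v' j ∈ openArc (v i) (v' i)))
    (i : Fin m) : ((e.symm (.inr i) - e.symm (.inl i) : Fin (2 * m)) : ℕ) = m := by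
  classical
  set a := e.symm (.inl i)
  set b := e.symm (.inr i)
  have hwa : (w a : AddCircle (2 * π)) = v i := by simp [a, hwe]
  have hwb : (w b : AddCircle (2 * π)) = v' i := by simp [b, hwe]
  have hmem : ∀ k, (w k : AddCircle (2 * π)) ∈ openArc (v i) (v' i) ↔
      0 < ((k - a : Fin (2 * m)) : ℕ) ∧
        ((k - a : Fin (2 * m)) : ℕ) < ((b - a : Fin (2 * m)) : ℕ) := by
    rw [← hwa, ← hwb]
    exact coe_mem_openArc_iff_sub_val hw hwin a b
  have hcount : #{k | (w k : AddCircle (2 * π)) ∈ openArc (v i) (v' i)} = m - 1 := by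
    rw [card_equiv e (t := {z | Sum.elim v v' z ∈ openArc (v i) (v' i)}) (by simp [hwe])]
    refine (card_filter_sum_elim_mem_of_xor i ?_ ?_ (halt i)).trans (by simp)
    · have := (hmem a).not.2 (by simp)
      rwa [hwa] at this
    · have := (hmem b).not.2 (by simp)
      rwa [hwb] at this
  rw [filter_congr fun k _ => hmem k, Fin.card_filter_sub_val_pos_and_lt a (b - a).is_le'] at hcount
  have hba : b - a ≠ 0 := sub_ne_zero.2 fun h => by simpa [a, b] using e.symm.injective h
  have hpos := Fin.pos_iff_ne_zero.2 hba
  omega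

open Real in
theorem alternating_pairs_antipodal (n : ℕ) (hn : 1 ≤ n)
    (v v' : Fin (2 * n) → AddCircle (2 * π))
    (hdist : Function.Injective (Sum.elim v v'))
    (halt : ∀ i j : Fin (2 * n), i ≠ j →
      Xor' (v j ∈ openArc (v i) (v' i)) (v' j ∈ openArc (v i) (v' i))) :
    ∃ f : AddCircle (2 * π) ≃ₜ AddCircle (2 * π),
      ∀ i, f (v' i) = f (v i) + ((π : ℝ) : AddCircle (2 * π)) := by
  have : NeZero (2 * (2 * n)) := ⟨by omega⟩
  let R : Fin (2 * n) ⊕ Fin (2 * n) → ℝ := fun z => AddCircle.equivIco (2 * π) 0 (Sum.elim v v' z)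
  have hR : ∀ z, (R z : AddCircle (2 * π)) = Sum.elim v v' z := fun z => AddCircle.coe_equivIco
  have hRmem : ∀ z, R z ∈ Ico 0 (2 * π) := fun z => by
    simpa using (AddCircle.equivIco (2 * π) 0 (Sum.elim v v' z)).2
  obtain ⟨e, he⟩ := exists_equiv_fin_strictMono (f := R) (N := 2 * (2 * n))
    (fun z z' h => hdist (by rw [← hR z, ← hR z', h]))
    (by rw [Fintype.card_sum, Fintype.card_fin]; ring)
  have hwin : ∀ k, R (e k) < R (e 0) + 2 * π := fun k => by
    linarith [(hRmem (e k)).2, (hRmem (e 0)).1]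
  obtain ⟨f, hf⟩ := AddCircle.exists_homeomorph_coe_apply_of_strictMono he hwin
  have hhalf := val_sub_eq_of_alternating he hwin e (fun k => hR (e k)) halt
  refine ⟨f, fun i => ?_⟩
  have hpt : ∀ z, (((R ∘ e) (e.symm z) : ℝ) : AddCircle (2 * π)) = Sum.elim v v' z := by simp [hR]
  change f (Sum.elim v v' (.inr i)) = f (Sum.elim v v' (.inl i)) + _
  rw [← hpt (.inr i), ← hpt (.inl i), hf, hf, AddCircle.coe_mul_val_div_eq_add (e.symm (.inl i)),
    hhalf]
  congr 2
  push_cast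
  field_simp
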